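/- For ground variadic nominal terms, if t ≈ t' and a # t holds, then a # t' holds (α-equivalence preserves freshness). -/

import Mathlib

abbrev Atom := ℕ

def swapAtom (a b c : Atom) : Atom :=
  if c = a then b else if c = b then a else c

/- Ground variadic nominal terms: t ::= a | a.t | f(s̃). -/
inductive GTm where
  | atom (a : Atom)
  | abs (a : Atom) (t : GTm)
  | app (f : ℕ) (args : List GTm)

/- The swapping action on ground terms. -/
def swapG (a b : Atom) : GTm → GTm
  | .atom c => .atom (swapAtom a b c)
  | .abs c t => .abs (swapAtom a b c) (swapG a b t)
  | .app f args => .app f (args.attach.map (fun r => swapG a b r.1))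
  decreasing_by all_goals first | (simp_wf; omega) | (simp_wf; obtain ⟨v, hv⟩ := r; have := List.sizeOf_lt_of_mem hv; simp_all; omega) | simp_wf

/- The freshness relation a # t on ground terms. -/
inductive GFresh : Atom → GTm → Prop
  | atom {a b : Atom} : a ≠ b → GFresh a (.atom b)
  | abs1 {a : Atom} {t : GTm} : GFresh a (.abs a t)
  | abs2 {a b : Atom} {t : GTm} : a ≠ b → GFresh a t → GFresh a (.abs b t)
  | app {a : Atom} {f : ℕ} {args : List GTm} :
      (∀ r ∈ args, GFresh a r) → GFresh a (.app f args)

/- α-equivalence on ground terms. -/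
inductive Aeq : GTm → GTm → Prop
  | atom {a : Atom} : Aeq (.atom a) (.atom a)
  | app {f : ℕ} {args args' : List GTm} :
      List.Forall₂ Aeq args args' → Aeq (.app f args) (.app f args')
  | abs1 {a : Atom} {t t' : GTm} : Aeq t t' → Aeq (.abs a t) (.abs a t')
  | abs2 {a b : Atom} {t t' : GTm} : a ≠ b → Aeq t (swapG a b t') →
      GFresh a (.abs b t') → Aeq (.abs a t) (.abs b t')

/-!
Induction on `t ≈ t'`. The only interesting case is the abstraction rule `a'.t ≈ b.t'` with
`a' ≠ b`: for `a ≠ a'` the induction hypothesis gives `a # (a' b)·t'`; since freshness is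
equivariant and `(a' b)` fixes `a` unless `a = b` (where `a # b.t'` holds outright), swapping back
yields `a # t'`. The case `a = a'` is the side condition `a' # b.t'` of the rule.
-/

lemma swapAtom_eq_swap (a b : Atom) : swapAtom a b = Equiv.swap a b := by
  funext c
  rw [Equiv.swap_apply_def, swapAtom]

@[simp]
lemma swapG_app (a b : Atom) (f : ℕ) (args : List GTm) :
    swapG a b (.app f args) = .app f (args.map (swapG a b)) := by
  rw [swapG, List.map_attach_eq_pmap, List.pmap_eq_map]

@[simp]
lemma swapG_swapG (a b : Atom) (t : GTm) : swapG a b (swapG a b t) = t := by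
  induction t using GTm.rec
    (motive_2 := fun l => l.map (fun r => swapG a b (swapG a b r)) = l) with
  | atom c => simp [swapG, swapAtom_eq_swap]
  | abs c t ih => simp [swapG, swapAtom_eq_swap, ih]
  | app f args ih => simpa [Function.comp_def] using ih
  | nil => rfl
  | cons r rs ih ihs => simp [ih, ihs]

lemma GFresh.swap {c : Atom} {t : GTm} (a b : Atom) (h : GFresh c t) :
    GFresh (swapAtom a b c) (swapG a b t) := by
  have swap_ne {d e : Atom} (hde : d ≠ e) : swapAtom a b d ≠ swapAtom a b e := by
    simpa [swapAtom_eq_swap] using hde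
  induction h with
  | atom hne => simpa only [swapG] using .atom (swap_ne hne)
  | abs1 => simpa only [swapG] using .abs1
  | abs2 hne _ ih => simpa only [swapG] using .abs2 (swap_ne hne) ih
  | app _ ih => simpa only [swapG_app] using .app (List.forall_mem_map.mpr ih)

lemma GFresh.abs_of_swapG {a a' b : Atom} {t : GTm} (ha : a ≠ a') (h : GFresh a (swapG a' b t)) :
    GFresh a (.abs b t) := by
  by_cases hb : a = b
  · exact hb ▸ .abs1
  · have h' := h.swap a' b
    rw [swapG_swapG, swapAtom_eq_swap, Equiv.swap_apply_of_ne_of_ne ha hb] at h'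
    exact .abs2 hb h'

lemma List.Forall₂.forall_mem_of_forall_mem {α β : Type*} {P : α → Prop} {Q : β → Prop}
    {l : List α} {l' : List β} (h : Forall₂ (fun x y => P x → Q y) l l') (hl : ∀ x ∈ l, P x) :
    ∀ y ∈ l', Q y := by
  induction h with
  | nil => simp
  | cons _ _ ih => simp_all

/-- α-equivalence preserves freshness on ground terms. -/
theorem aeq_preserves_fresh {a : Atom} {t t' : GTm}
    (h : Aeq t t') (hf : GFresh a t) : GFresh a t' := by
  induction h using Aeq.rec
    (motive_2 := fun l l' _ => List.Forall₂ (fun r r' => GFresh a r → GFresh a r') l l') with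
  | atom => exact hf
  | app _ ih =>
    cases hf with
    | app hargs => exact .app (ih.forall_mem_of_forall_mem hargs)
  | abs1 _ ih =>
    cases hf with
    | abs1 => exact .abs1
    | abs2 hne hbody => exact .abs2 hne (ih hbody)
  | abs2 _ _ hfresh ih =>
    cases hf with
    | abs1 => exact hfresh
    | abs2 hne hbody => exact (ih hbody).abs_of_swapG hne
  | nil => exact .nil
  | cons _ _ ih ihs => exact .cons ih ihs
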